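/- arXiv:1301.7150 — 2 statements merged into one kernel-verified Lean document; each statement's English description precedes it below -/
import Mathlib

section
/- Let m be an integer with m ≥ 5. Then every positive three-times differentiable function f : ℝ → ℝ satisfying f(t)²·f'''(t) − (2(m+1)/(m−2))·f(t)·f'(t)·f''(t) + (m²/(m−2)²)·f'(t)³ = 0 for all t ∈ ℝ is constant; equivalently, equation (1.1) has no non-trivial positive global solution on ℝ when m ≥ 5. -/
/-!
The logarithmic derivative `u = f'/f` of a solution satisfies `u'' = 2(a + b) u u' - 2ab u³` with
`a = 2/(m-2) > 0 > b = (4-m)/(2(m-2))`. Then `P = u' - a u²` and `Q = u' - b u²` solve the linear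
equations `P' = 2bu P`, `Q' = 2au Q`, so neither changes sign. If `P ≥ 0` or `Q ≤ 0`, then `u`
satisfies a Riccati inequality `u' ≥ ε u²` or `u' ≤ -ε u²` on all of `ℝ`, and a nonzero value of `u`
would blow up in finite time forwards or backwards. Otherwise `b u² < u' < a u²`, so `u` has no zero
and `v = u'/u²` solves `v' = 2u(a - v)(v - b)`; it is strictly monotone, which again yields a
Riccati inequality on a half-line. Hence `u = 0`, i.e. `f' = 0`.
-/

open Set

theorem deriv_neg_comp_neg (u : ℝ → ℝ) (t : ℝ) :
    deriv (fun s => -u (-s)) t = deriv u (-t) := by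
  rw [deriv.fun_neg, deriv_comp_neg, neg_neg]

theorem nonpos_of_mul_sq_le_deriv_Ici {u : ℝ → ℝ} {ε t₀ : ℝ} (hu : Differentiable ℝ u) (hε : 0 < ε)
    (h : ∀ t, t₀ ≤ t → ε * u t ^ 2 ≤ deriv u t) : u t₀ ≤ 0 := by
  by_contra! h₀
  have hpos : ∀ t ∈ Ici t₀, 0 < u t := by
    have hmono : MonotoneOn u (Ici t₀) :=
      monotoneOn_of_deriv_nonneg (convex_Ici t₀) hu.continuous.continuousOn hu.differentiableOn
        fun t ht => (by positivity : 0 ≤ ε * u t ^ 2).trans (h t (interior_subset ht))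
    exact fun t ht => h₀.trans_le (hmono self_mem_Ici ht ht)
  -- `-1/u - εt` is nondecreasing while `u > 0`, so `-1/u` would reach `0` in finite time.
  have hg : MonotoneOn (fun t => -(u t)⁻¹ - ε * t) (Ici t₀) := by
    have hderiv : ∀ t ∈ Ici t₀,
        HasDerivAt (fun t => -(u t)⁻¹ - ε * t) (deriv u t / u t ^ 2 - ε) t := fun t ht =>
      (((hu t).hasDerivAt.fun_inv (hpos t ht).ne').fun_neg.sub
        ((hasDerivAt_id t).const_mul ε)).congr_deriv (by simp [neg_div])
    refine monotoneOn_of_deriv_nonneg (convex_Ici t₀)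
      (fun t ht => (hderiv t ht).continuousAt.continuousWithinAt)
      (fun t ht => (hderiv t (interior_subset ht)).differentiableAt.differentiableWithinAt)
      fun t ht => ?_
    have ht := interior_subset ht
    rw [(hderiv t ht).deriv, sub_nonneg, le_div_iff₀ (pow_pos (hpos t ht) 2)]
    exact h t ht
  set T := t₀ + (u t₀)⁻¹ / ε
  have hT : t₀ ≤ T := le_add_of_nonneg_right (by positivity)
  have hgT : -(u t₀)⁻¹ - ε * t₀ ≤ -(u T)⁻¹ - ε * T := hg self_mem_Ici hT hT
  have hεT : ε * T = ε * t₀ + (u t₀)⁻¹ := by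
    simp only [T, mul_add, mul_div_cancel₀ _ hε.ne']
  linarith [inv_pos.2 (hpos T hT)]

theorem nonneg_of_mul_sq_le_deriv_Iic {u : ℝ → ℝ} {ε t₀ : ℝ} (hu : Differentiable ℝ u) (hε : 0 < ε)
    (h : ∀ t, t ≤ t₀ → ε * u t ^ 2 ≤ deriv u t) : 0 ≤ u t₀ := by
  have := nonpos_of_mul_sq_le_deriv_Ici (u := fun s => -u (-s)) (t₀ := -t₀)
    (hu.comp differentiable_neg).neg hε fun t ht => by
      rw [deriv_neg_comp_neg, neg_sq]
      exact h (-t) (by linarith)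
  simpa using this

theorem eq_zero_of_mul_sq_le_deriv {u : ℝ → ℝ} {ε : ℝ} (hu : Differentiable ℝ u) (hε : 0 < ε)
    (h : ∀ t, ε * u t ^ 2 ≤ deriv u t) (t : ℝ) : u t = 0 :=
  le_antisymm (nonpos_of_mul_sq_le_deriv_Ici hu hε fun s _ => h s) (nonneg_of_mul_sq_le_deriv_Iic hu hε fun s _ => h s)

theorem eq_zero_of_deriv_le_neg_mul_sq {u : ℝ → ℝ} {ε : ℝ} (hu : Differentiable ℝ u)
    (hε : 0 < ε) (h : ∀ t, deriv u t ≤ -(ε * u t ^ 2)) (t : ℝ) : u t = 0 := by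
  have := eq_zero_of_mul_sq_le_deriv hu.neg hε (fun s => by
    rw [deriv.neg, Pi.neg_apply, neg_sq]; exact le_neg.2 (h s)) t
  simpa using this

theorem not_strictMono_deriv_div_sq_of_pos {u : ℝ → ℝ} (hu : Differentiable ℝ u)
    (hpos : ∀ t, 0 < u t) : ¬StrictMono fun t => deriv u t / u t ^ 2 := by
  intro hv
  set v := fun t => deriv u t / u t ^ 2
  have hu' : ∀ t, deriv u t = v t * u t ^ 2 := fun t =>
    (div_mul_cancel₀ _ (pow_pos (hpos t) 2).ne').symm
  rcases lt_or_ge 0 (v 0) with hv₀ | hv₀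
  · refine (nonpos_of_mul_sq_le_deriv_Ici hu hv₀ fun t ht => ?_).not_gt (hpos 0)
    rw [hu']
    exact mul_le_mul_of_nonneg_right (hv.monotone ht) (sq_nonneg _)
  · have hv₁ : v (-1) < 0 := (hv (by norm_num : (-1 : ℝ) < 0)).trans_le hv₀
    refine (nonneg_of_mul_sq_le_deriv_Iic hu.neg (neg_pos.2 hv₁) (t₀ := -1) fun t ht => ?_).not_gt
      (neg_neg_of_pos (hpos (-1)))
    rw [deriv.neg, hu', Pi.neg_apply, neg_sq, neg_mul, neg_le_neg_iff]
    exact mul_le_mul_of_nonneg_right (hv.monotone ht) (sq_nonneg _)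

theorem not_strictAnti_deriv_div_sq_of_neg {u : ℝ → ℝ} (hu : Differentiable ℝ u)
    (hneg : ∀ t, u t < 0) : ¬StrictAnti fun t => deriv u t / u t ^ 2 := by
  intro hv
  refine not_strictMono_deriv_div_sq_of_pos (u := fun s => -u (-s))
    (hu.comp differentiable_neg).neg (fun t => neg_pos.2 (hneg (-t))) ?_
  simp only [deriv_neg_comp_neg, neg_sq]
  exact fun _ _ h => hv (neg_lt_neg h)

theorem Continuous.forall_pos_or_forall_neg {X : Type*} [TopologicalSpace X]
    [PreconnectedSpace X] {u : X → ℝ} (hu : Continuous u) (h : ∀ x, u x ≠ 0) :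
    (∀ x, 0 < u x) ∨ ∀ x, u x < 0 := by
  by_contra! ⟨⟨x, hx⟩, ⟨y, hy⟩⟩
  obtain ⟨z, hz⟩ := intermediate_value_univ x y hu ⟨hx, hy⟩
  exact h z hz

theorem eq_exp_integral_mul_of_deriv_eq_mul {p g : ℝ → ℝ} (hp : Differentiable ℝ p)
    (hg : Continuous g) (h : ∀ t, deriv p t = g t * p t) (t : ℝ) :
    p t = Real.exp (∫ s in (0 : ℝ)..t, g s) * p 0 := by
  set G := fun t => ∫ s in (0 : ℝ)..t, g s
  have hG : ∀ t, HasDerivAt G (g t) t := fun t =>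
    (hg.integral_hasStrictDerivAt 0 t).hasDerivAt
  have hconst : ∀ t, HasDerivAt (fun t => Real.exp (-G t) * p t) 0 t := fun t =>
    (((hG t).neg.exp).mul (hp t).hasDerivAt).congr_deriv (by rw [h]; ring)
  have := is_const_of_deriv_eq_zero (fun s => (hconst s).differentiableAt)
    (fun s => (hconst s).deriv) t 0
  simp only [G, intervalIntegral.integral_same, neg_zero, Real.exp_zero, one_mul] at this
  rw [← this, ← mul_assoc, ← Real.exp_add, add_neg_cancel, Real.exp_zero, one_mul]

theorem false_of_mul_sq_lt_deriv_lt_mul_sq {u : ℝ → ℝ} {a b : ℝ} (hu : Differentiable ℝ u)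
    (hu' : Differentiable ℝ (deriv u))
    (hode : ∀ t, deriv (deriv u) t = 2 * (a + b) * u t * deriv u t - 2 * a * b * u t ^ 3)
    (hb : ∀ t, b * u t ^ 2 < deriv u t) (ha : ∀ t, deriv u t < a * u t ^ 2) : False := by
  have hne : ∀ t, u t ≠ 0 := fun t h₀ => by
    have := (hb t).trans (ha t)
    simp [h₀] at this
  set v := fun t => deriv u t / u t ^ 2
  have hv : ∀ t, HasDerivAt v (2 * u t * (a - v t) * (v t - b)) t := fun t =>
    ((hu' t).hasDerivAt.div ((hu t).hasDerivAt.fun_pow 2) (pow_ne_zero 2 (hne t))).congr_deriv (by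
      simp only [v, hode]
      field_simp [hne t]
      ring)
  have hva : ∀ t, 0 < a - v t := fun t =>
    sub_pos.2 ((div_lt_iff₀ (sq_pos_of_ne_zero (hne t))).2 (ha t))
  have hvb : ∀ t, 0 < v t - b := fun t =>
    sub_pos.2 ((lt_div_iff₀ (sq_pos_of_ne_zero (hne t))).2 (hb t))
  rcases hu.continuous.forall_pos_or_forall_neg hne with hpos | hneg
  · refine not_strictMono_deriv_div_sq_of_pos hu hpos (strictMono_of_deriv_pos fun t => ?_)
    rw [(hv t).deriv]
    exact mul_pos (mul_pos (mul_pos two_pos (hpos t)) (hva t)) (hvb t)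
  · refine not_strictAnti_deriv_div_sq_of_neg hu hneg (strictAnti_of_deriv_neg fun t => ?_)
    rw [(hv t).deriv]
    exact mul_neg_of_neg_of_pos (mul_neg_of_neg_of_pos (by linarith [hneg t]) (hva t)) (hvb t)

theorem eq_zero_of_deriv_deriv_eq {u : ℝ → ℝ} {a b : ℝ} (hu : Differentiable ℝ u)
    (hu' : Differentiable ℝ (deriv u)) (hb : b < 0) (ha : 0 < a)
    (hode : ∀ t, deriv (deriv u) t = 2 * (a + b) * u t * deriv u t - 2 * a * b * u t ^ 3)
    (t : ℝ) : u t = 0 := by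
  have hsign : ∀ c d : ℝ, c + d = a + b → c * d = a * b → ∀ t,
      deriv u t - c * u t ^ 2 = Real.exp (∫ s in (0 : ℝ)..t, 2 * d * u s) *
        (deriv u 0 - c * u 0 ^ 2) := fun c d hcd hcd' =>
    eq_exp_integral_mul_of_deriv_eq_mul (hu'.sub ((hu.pow 2).const_mul c))
      (continuous_const.mul hu.continuous) fun t => by
        rw [((hu' t).hasDerivAt.fun_sub (((hu t).hasDerivAt.fun_pow 2).const_mul c)).deriv, hode]
        linear_combination (-2 * u t * deriv u t) * hcd + 2 * u t ^ 3 * hcd'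
  have hP := hsign a b rfl rfl
  have hQ := hsign b a (add_comm b a) (mul_comm b a)
  rcases le_or_gt 0 (deriv u 0 - a * u 0 ^ 2) with hP₀ | hP₀
  · refine eq_zero_of_mul_sq_le_deriv hu ha (fun s => ?_) t
    have := hP s ▸ mul_nonneg (Real.exp_pos _).le hP₀
    linarith
  rcases le_or_gt (deriv u 0 - b * u 0 ^ 2) 0 with hQ₀ | hQ₀
  · refine eq_zero_of_deriv_le_neg_mul_sq hu (neg_pos.2 hb) (fun s => ?_) t
    have := hQ s ▸ mul_nonpos_of_nonneg_of_nonpos (Real.exp_pos _).le hQ₀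
    linarith
  refine (false_of_mul_sq_lt_deriv_lt_mul_sq hu hu' hode (fun s => ?_) (fun s => ?_)).elim
  · have := hQ s ▸ mul_pos (Real.exp_pos _) hQ₀
    linarith
  · have := hP s ▸ mul_neg_of_pos_of_neg (Real.exp_pos _) hP₀
    linarith

theorem hasDerivAt_logDeriv {f : ℝ → ℝ} {t : ℝ} (hf : f t ≠ 0) (hd1 : DifferentiableAt ℝ f t)
    (hd2 : DifferentiableAt ℝ (deriv f) t) :
    HasDerivAt (logDeriv f) (deriv (deriv f) t / f t - logDeriv f t ^ 2) t :=
  (hd2.hasDerivAt.div hd1.hasDerivAt hf).congr_deriv (by rw [logDeriv_apply]; field_simp)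

theorem deriv_logDeriv {f : ℝ → ℝ} (hf : ∀ t, f t ≠ 0) (hd1 : Differentiable ℝ f)
    (hd2 : Differentiable ℝ (deriv f)) :
    deriv (logDeriv f) = fun t => deriv (deriv f) t / f t - logDeriv f t ^ 2 :=
  funext fun t => (hasDerivAt_logDeriv (hf t) (hd1 t) (hd2 t)).deriv

theorem deriv_deriv_logDeriv {f : ℝ → ℝ} {α β : ℝ} (hf : ∀ t, f t ≠ 0)
    (hd1 : Differentiable ℝ f) (hd2 : Differentiable ℝ (deriv f))
    (hd3 : Differentiable ℝ (deriv (deriv f)))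
    (hode : ∀ t, f t ^ 2 * deriv (deriv (deriv f)) t + α * f t * deriv f t * deriv (deriv f) t
      + β * deriv f t ^ 3 = 0) (t : ℝ) :
    deriv (deriv (logDeriv f)) t = -(α + 3) * logDeriv f t * deriv (logDeriv f) t
      - (α + β + 1) * logDeriv f t ^ 3 := by
  rw [deriv_logDeriv hf hd1 hd2, (((hd3 t).hasDerivAt.fun_div (hd1 t).hasDerivAt (hf t)).fun_sub
    ((hasDerivAt_logDeriv (hf t) (hd1 t) (hd2 t)).fun_pow 2)).deriv]
  simp only [logDeriv_apply, Nat.cast_ofNat, Nat.reduceSub, pow_one]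
  field_simp [hf t]
  linear_combination hode t

/-- For m ≥ 5, every positive global solution of equation (1.1) on ℝ is
constant. -/
theorem stmt_12 (m : ℤ) (hm : 5 ≤ m)
    (f : ℝ → ℝ) (hf : ∀ t, 0 < f t)
    (hd1 : Differentiable ℝ f) (hd2 : Differentiable ℝ (deriv f))
    (hd3 : Differentiable ℝ (deriv (deriv f)))
    (hode : ∀ t, (f t) ^ 2 * deriv (deriv (deriv f)) t
      - (2 * ((m:ℝ) + 1) / ((m:ℝ) - 2)) * f t * deriv f t * deriv (deriv f) t
      + ((m:ℝ) ^ 2 / ((m:ℝ) - 2) ^ 2) * (deriv f t) ^ 3 = 0) :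
    ∀ s t, f s = f t := by
  have hm : (5 : ℝ) ≤ m := by exact_mod_cast hm
  have hm₂ : (m : ℝ) - 2 ≠ 0 := by linarith
  have hf₀ : ∀ t, f t ≠ 0 := fun t => (hf t).ne'
  have hu : Differentiable ℝ (logDeriv f) := hd2.div hd1 hf₀
  have hu' : Differentiable ℝ (deriv (logDeriv f)) := by
    rw [deriv_logDeriv hf₀ hd1 hd2]
    exact (hd3.div hd1 hf₀).sub (hu.pow 2)
  -- `a`, `b` are the roots of `x² + (α + 3) x / 2 + (α + β + 1) / 2` for the coefficients of (1.1).
  have hlog : ∀ t, logDeriv f t = 0 :=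
    eq_zero_of_deriv_deriv_eq (a := 2 / (m - 2)) (b := (4 - m) / (2 * (m - 2))) hu hu'
      (div_neg_of_neg_of_pos (by linarith) (by linarith)) (div_pos two_pos (by linarith))
      fun t => by
        rw [deriv_deriv_logDeriv (α := -(2 * (m + 1) / (m - 2))) (β := m ^ 2 / (m - 2) ^ 2)
          hf₀ hd1 hd2 hd3 (fun t => by linear_combination hode t)]
        field_simp
        ring
  have hf' : ∀ t, deriv f t = 0 := fun t => by simpa [logDeriv_apply, hf₀ t] using hlog t
  exact fun s t => is_const_of_deriv_eq_zero hd1 hf' s t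
end

section
/- Every twice differentiable function u : ℝ → ℝ satisfying u''(t) = 2·u(t)·u'(t) for all t ∈ ℝ is either a constant function or of the form u(t) = −b·tanh(b·t + c) for some real constants b ≠ 0 and c. -/
/-!
Differentiating `u' - u²` shows that `u` solves the Riccati equation `u' = u² + k`, while
`u'' = 2 u u'` is a linear equation for `u'`, so `u' = u'(0) · exp (2 ∫₀ᵗ u)` has constant sign.
If `u'(0) = 0`, then `u` is constant. If `u' > 0`, then `u` increases without bound and `-1/u`
grows at least linearly while staying negative, which is impossible. If `u' < 0`, then
`k = -b²` with `|u| < b`, and `artanh (-u / b)` has derivative `b`, so `u = -b tanh (b t + c)`.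
-/

open Real Set Topology

theorem Real.hasDerivAt_artanh {x : ℝ} (hx : x ∈ Ioo (-1) 1) :
    HasDerivAt artanh (1 / (1 - x ^ 2)) x := by
  have h₁ : 0 < 1 + x := by linarith [hx.1]
  have h₂ : 0 < 1 - x := by linarith [hx.2]
  have heq : (fun y => (log (1 + y) - log (1 - y)) / 2) =ᶠ[𝓝 x] artanh := by
    filter_upwards [Ioo_mem_nhds hx.1 hx.2] with y hy
    rw [artanh_eq_half_log (Ioo_subset_Icc_self hy),
      log_div (by linarith [hy.1]) (by linarith [hy.2])]
    ring
  have hlog := (((hasDerivAt_id' x).const_add 1).log h₁.ne').sub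
    (((hasDerivAt_id' x).const_sub 1).log h₂.ne')
  refine ((hlog.div_const 2).congr_of_eventuallyEq heq.symm).congr_deriv ?_
  rw [show 1 - x ^ 2 = (1 + x) * (1 - x) by ring]
  field_simp
  ring

theorem eq_mul_exp_integral_of_hasDerivAt {y a : ℝ → ℝ} (ha : Continuous a)
    (hy : ∀ t, HasDerivAt y (a t * y t) t) (t : ℝ) :
    y t = y 0 * exp (∫ s in (0 : ℝ)..t, a s) := by
  set A : ℝ → ℝ := fun t => ∫ s in (0 : ℝ)..t, a s
  have hA : ∀ t, HasDerivAt A (a t) t := fun t =>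
    (ha.integral_hasStrictDerivAt 0 t).hasDerivAt
  have hw : ∀ t, HasDerivAt (fun t => y t * exp (-A t)) 0 t := fun t =>
    ((hy t).mul (hA t).neg.exp).congr_deriv (by ring)
  have hconst := is_const_of_deriv_eq_zero (fun t => (hw t).differentiableAt)
    (fun t => (hw t).deriv) t 0
  have hA0 : A 0 = 0 := intervalIntegral.integral_same
  simp only [hA0, neg_zero, exp_zero, mul_one] at hconst
  rw [← hconst, mul_assoc, ← exp_add, neg_add_cancel, exp_zero, mul_one]

theorem exists_le_of_le_hasDerivAt {f f' : ℝ → ℝ} {a c : ℝ} (hc : 0 < c)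
    (hf : ∀ t, a ≤ t → HasDerivAt f (f' t) t) (hf' : ∀ t, a ≤ t → c ≤ f' t) (M : ℝ) :
    ∃ t, a ≤ t ∧ M ≤ f t := by
  have hgrowth := (convex_Ici a).mul_sub_le_image_sub_of_le_deriv
    (fun t ht => (hf t ht).continuousAt.continuousWithinAt)
    (fun t ht => (hf t (interior_subset ht)).differentiableAt.differentiableWithinAt)
    (fun t ht => (hf t (interior_subset ht)).deriv ▸ hf' t (interior_subset ht))
  set t := a + |M - f a| / c
  have hat : a ≤ t := le_add_of_nonneg_right (by positivity)
  refine ⟨t, hat, ?_⟩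
  have := hgrowth a self_mem_Ici t hat hat
  have hct : c * (t - a) = |M - f a| := by simp only [t]; field_simp; ring
  linarith [le_abs_self (M - f a)]

def IsRiccatiSolution (k : ℝ) (u : ℝ → ℝ) : Prop :=
  ∀ t, HasDerivAt u (u t ^ 2 + k) t

theorem isRiccatiSolution_of_deriv_deriv_eq {u : ℝ → ℝ} (hu : Differentiable ℝ u)
    (hu' : Differentiable ℝ (deriv u)) (hode : ∀ t, deriv (deriv u) t = 2 * u t * deriv u t) :
    IsRiccatiSolution (deriv u 0 - u 0 ^ 2) u := by
  have hF : ∀ t, HasDerivAt (fun t => deriv u t - u t ^ 2) 0 t := fun t =>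
    ((hu' t).hasDerivAt.sub ((hu t).hasDerivAt.pow 2)).congr_deriv (by rw [hode t]; ring)
  intro t
  have hconst := is_const_of_deriv_eq_zero (fun t => (hF t).differentiableAt)
    (fun t => (hF t).deriv) t 0
  exact (hu t).hasDerivAt.congr_deriv (by linarith)

namespace IsRiccatiSolution

variable {k : ℝ} {u : ℝ → ℝ}

theorem neg_comp_neg (hu : IsRiccatiSolution k u) :
    IsRiccatiSolution k (fun t => -u (-t)) := fun t =>
  ((hu (-t)).comp t (hasDerivAt_neg t)).neg.congr_deriv (by simp)

theorem not_forall_pos_of_nonneg (hu : IsRiccatiSolution k u) {t₀ : ℝ} (h₀ : 0 ≤ u t₀) :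
    ¬ ∀ t, 0 < u t ^ 2 + k := by
  intro hpos
  have hmono : StrictMono u := strictMono_of_hasDerivAt_pos hu hpos
  have hslope : ∀ t, t₀ ≤ t → u t₀ ^ 2 + k ≤ u t ^ 2 + k := fun t ht => by
    have := hmono.monotone ht
    nlinarith
  -- the threshold `|k| + 1` makes `u² ≥ 2|k|`, hence `u' ≥ u² / 2`, from `t₁` on
  obtain ⟨t₁, -, hu₁⟩ :=
    exists_le_of_le_hasDerivAt (hpos t₀) (fun t _ => hu t) hslope (|k| + 1)
  have hlarge : ∀ t, t₁ ≤ t → |k| + 1 ≤ u t := fun t ht => hu₁.trans (hmono.monotone ht)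
  have hupos : ∀ t, t₁ ≤ t → 0 < u t := fun t ht => by
    linarith [hlarge t ht, abs_nonneg k]
  have hinv : ∀ t, t₁ ≤ t → HasDerivAt (fun t => -(u t)⁻¹) ((u t ^ 2 + k) / u t ^ 2) t :=
    fun t ht => ((hu t).inv (hupos t ht).ne').neg.congr_deriv (by ring)
  have hrate : ∀ t, t₁ ≤ t → 1 / 2 ≤ (u t ^ 2 + k) / u t ^ 2 := fun t ht => by
    have := hlarge t ht
    rw [le_div_iff₀ (pow_pos (hupos t ht) 2)]
    nlinarith [neg_abs_le k, abs_nonneg k]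
  obtain ⟨T, hT, hT'⟩ := exists_le_of_le_hasDerivAt one_half_pos hinv hrate 0
  linarith [inv_pos.2 (hupos T hT)]

theorem not_forall_pos (hu : IsRiccatiSolution k u) : ¬ ∀ t, 0 < u t ^ 2 + k := by
  rcases le_total 0 (u 0) with h | h
  · exact hu.not_forall_pos_of_nonneg h
  · exact fun hpos => hu.neg_comp_neg.not_forall_pos_of_nonneg (t₀ := 0) (by simpa using h)
      fun t => by simpa using hpos (-t)

theorem eq_neg_mul_tanh (hu : IsRiccatiSolution k u) (hneg : ∀ t, u t ^ 2 + k < 0) :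
    ∃ b c : ℝ, b ≠ 0 ∧ ∀ t, u t = -b * tanh (b * t + c) := by
  have hk : 0 < -k := by nlinarith [hneg 0, sq_nonneg (u 0)]
  set b := √(-k)
  have hb : 0 < b := sqrt_pos.2 hk
  have hb2 : b ^ 2 = -k := sq_sqrt hk.le
  have hmem : ∀ t, -u t / b ∈ Ioo (-1) 1 := fun t => by
    obtain ⟨h₁, h₂⟩ := abs_lt_of_sq_lt_sq' (a := u t) (by linarith [hneg t]) hb.le
    constructor
    · rw [lt_div_iff₀ hb]; linarith
    · rw [div_lt_iff₀ hb]; linarith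
  have hg : ∀ t, HasDerivAt (fun t => artanh (-u t / b) - b * t) 0 t := fun t => by
    refine (((hasDerivAt_artanh (hmem t)).comp t ((hu t).neg.div_const b)).sub
      ((hasDerivAt_id t).const_mul b)).congr_deriv ?_
    have : b ^ 2 - u t ^ 2 ≠ 0 := by linarith [hneg t]
    rw [show k = -b ^ 2 by linarith]
    field_simp
    ring
  refine ⟨b, artanh (-u 0 / b), hb.ne', fun t => ?_⟩
  have hconst := is_const_of_deriv_eq_zero (fun t => (hg t).differentiableAt)
    (fun t => (hg t).deriv) t 0
  rw [show b * t + artanh (-u 0 / b) = artanh (-u t / b) by linarith, tanh_artanh (hmem t)]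
  field_simp

end IsRiccatiSolution

/-- Every global solution of u'' = 2 u u' is constant or of the form
u(t) = −b·tanh(b t + c) with b ≠ 0. -/
theorem stmt_13 (u : ℝ → ℝ) (hu : Differentiable ℝ u)
    (hu' : Differentiable ℝ (deriv u))
    (hode : ∀ t, deriv (deriv u) t = 2 * u t * deriv u t) :
    (∃ c : ℝ, ∀ t, u t = c) ∨
    (∃ b c : ℝ, b ≠ 0 ∧ ∀ t, u t = -b * Real.tanh (b * t + c)) := by
  have hric := isRiccatiSolution_of_deriv_deriv_eq hu hu' hode
  have hderiv : ∀ t, deriv u t = u t ^ 2 + (deriv u 0 - u 0 ^ 2) := fun t => (hric t).deriv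
  have hsign : ∀ t, deriv u t = deriv u 0 * exp (∫ s in (0 : ℝ)..t, 2 * u s) :=
    eq_mul_exp_integral_of_hasDerivAt (continuous_const.mul hu.continuous)
      fun t => hode t ▸ (hu' t).hasDerivAt
  rcases lt_trichotomy (deriv u 0) 0 with h | h | h
  · exact Or.inr <| hric.eq_neg_mul_tanh fun t =>
      hderiv t ▸ hsign t ▸ mul_neg_of_neg_of_pos h (exp_pos _)
  · exact Or.inl ⟨u 0, fun t => is_const_of_deriv_eq_zero hu (fun s => by simp [hsign s, h]) t 0⟩
  · exact (hric.not_forall_pos fun t => hderiv t ▸ hsign t ▸ mul_pos h (exp_pos _)).elim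
end
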